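/- arXiv:0708.1675 — 2 statements merged into one kernel-verified Lean document; each statement's English description precedes it below -/
import Mathlib

section
/- Let n ≥ 2, let p divide r, and fix any integer α with 0 ≤ α < r/p. Then the subgroup H of G(r,p,n) generated by the elements u_0, u_1, …, u_{n−2} is isomorphic to the wreath product G(r, n−1); moreover, the map sending each ((c_1,…,c_{n−1},c_n); t) ∈ H to ((c_1,…,c_{n−1}); t) ∈ G(r,n−1) is a group isomorphism. -/
/-- `swapNat n j` is the adjacent transposition `s_{j+1}` (the swap of the 1-indexed
letters `j+1` and `j+2`, i.e. of the `Fin n` indices `j` and `j+1`). -/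
def swapNat (n j : ℕ) : Equiv.Perm (Fin n) :=
  if h : j + 1 < n then Equiv.swap ⟨j, Nat.lt_of_succ_lt h⟩ ⟨j + 1, h⟩ else 1

/-- `tcyc n i` is the cycle `t_i = s_i s_{i-1} ⋯ s_1 = (i+1, i, …, 1)`
(sending `i+1 ↦ i ↦ ⋯ ↦ 1 ↦ i+1`); `tcyc n 0` is the identity. -/
def tcyc (n i : ℕ) : Equiv.Perm (Fin n) :=
  ((List.range i).reverse.map (swapNat n)).prod
/-- The wreath product `G(r,n) = Z_r ≀ S_n`: pairs `((c_1,…,c_n); π)` with `c_i ∈ Z_r`,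
`π ∈ S_n`. -/
@[ext]
structure WreathZ (r n : ℕ) where
  c : Fin n → ZMod r
  pi : Equiv.Perm (Fin n)

namespace WreathZ

variable {r n : ℕ}

instance : Mul (WreathZ r n) :=
  ⟨fun x y => ⟨fun i => x.c i + y.c (x.pi⁻¹ i), x.pi * y.pi⟩⟩

instance : One (WreathZ r n) := ⟨⟨0, 1⟩⟩

instance : Inv (WreathZ r n) := ⟨fun x => ⟨fun i => -x.c (x.pi i), x.pi⁻¹⟩⟩

@[simp] lemma mul_c (x y : WreathZ r n) : (x * y).c = fun i => x.c i + y.c (x.pi⁻¹ i) := rfl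
@[simp] lemma mul_pi (x y : WreathZ r n) : (x * y).pi = x.pi * y.pi := rfl
@[simp] lemma one_c : (1 : WreathZ r n).c = 0 := rfl
@[simp] lemma one_pi : (1 : WreathZ r n).pi = 1 := rfl
@[simp] lemma inv_c (x : WreathZ r n) : x⁻¹.c = fun i => -x.c (x.pi i) := rfl
@[simp] lemma inv_pi (x : WreathZ r n) : x⁻¹.pi = x.pi⁻¹ := rfl

instance : Group (WreathZ r n) where
  mul_assoc x y z := by
    ext i
    · simp [add_assoc, Equiv.Perm.mul_apply]
    · simp [mul_assoc]
  one_mul x := by ext i <;> simp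
  mul_one x := by ext i <;> simp
  inv_mul_cancel x := by
    ext i
    · simp [Equiv.Perm.mul_apply]
    · simp

end WreathZ

/-- The complex reflection group `G(r,p,n)`: the subgroup of `G(r,n)` of elements whose
color sum is `0` modulo `p`. -/
def Grpn (r p n : ℕ) (h : p ∣ r) : Subgroup (WreathZ r n) where
  carrier := {x | ZMod.castHom h (ZMod p) (∑ i, x.c i) = 0}
  one_mem' := by simp
  mul_mem' := by
    intro a b ha hb
    simp only [Set.mem_setOf_eq, WreathZ.mul_c] at *
    rw [Finset.sum_add_distrib, map_add, ha, Equiv.sum_comp a.pi⁻¹ b.c, hb, add_zero]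
  inv_mem' := by
    intro a ha
    simp only [Set.mem_setOf_eq, WreathZ.inv_c] at *
    rw [show (∑ x : Fin n, -a.c (a.pi x)) = -∑ x : Fin n, a.c (a.pi x) by
      rw [Finset.sum_neg_distrib]]
    rw [map_neg, Equiv.sum_comp a.pi (fun i => a.c i), ha, neg_zero]

/-- The color vector `(1, 0, …, 0, a-1) ∈ Z_r^n` (first entry `1`, last entry `a-1`,
all other entries `0`). -/
def cbar (r n : ℕ) (a : ℤ) : Fin n → ZMod r := fun j =>
  (if j.val = 0 then 1 else 0) + (if j.val = n - 1 then (a : ZMod r) - 1 else 0)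

/-- The elements `u_i = (c̄_i; t_i) ∈ G(r,p,n)` for `0 ≤ i ≤ n-1`, where
`c̄_i = (1, 0, …, 0, αp-1)` for `i ≤ n-2` and `c̄_{n-1} = (1, 0, …, 0, p-1)`. -/
def uElt (r p n α i : ℕ) : WreathZ r n :=
  if i = n - 1 then ⟨cbar r n (p : ℤ), tcyc n i⟩
  else ⟨cbar r n ((α : ℤ) * (p : ℤ)), tcyc n i⟩

/-!
For `w ∈ Z_r`, appending the coordinate `w · (c_1 + ⋯ + c_m)` to the colours and letting the
permutation fix the new last letter is an injective homomorphism `G(r,m) → G(r,m+1)`: the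
colour sum is additive and invariant under permuting the colours. With `w = αp - 1` it sends
`v_i = ((1,0,…,0); t_i) ∈ G(r,n-1)` to `u_i`, so `H` is its image once the `v_i` are known to
generate `G(r,n-1)`. They do: `t_{i+1} t_i⁻¹ = s_{i+1}`, so they map onto `S_{n-1}`, and
conjugating powers of `v_0 = ((1,0,…,0); 1)` by lifts of permutations yields every diagonal
element `((c_1,…,c_{n-1}); 1)`.
-/

open Equiv Multiplicative

lemma tcyc_succ (m i : ℕ) : tcyc m (i + 1) = swapNat m i * tcyc m i := by
  simp [tcyc, List.range_succ]

namespace Fin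

noncomputable def castSuccPerm (m : ℕ) : Perm (Fin m) →* Perm (Fin (m + 1)) :=
  Perm.viaEmbeddingHom castSuccEmb

variable {m : ℕ}

@[simp] lemma castSuccPerm_castSucc (π : Perm (Fin m)) (j : Fin m) :
    castSuccPerm m π j.castSucc = (π j).castSucc :=
  Perm.viaEmbedding_apply π castSuccEmb j

@[simp] lemma castSuccPerm_last (π : Perm (Fin m)) : castSuccPerm m π (last m) = last m :=
  Perm.viaEmbedding_apply_of_notMem π castSuccEmb _ (by simp)

lemma castSuccPerm_swap (i j : Fin m) :
    castSuccPerm m (swap i j) = swap i.castSucc j.castSucc := by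
  ext x
  induction x using lastCases with
  | last =>
    rw [castSuccPerm_last, swap_apply_of_ne_of_ne (castSucc_ne_last i).symm
      (castSucc_ne_last j).symm]
  | cast y => simp [(castSucc_injective m).swap_apply]

lemma castSuccPerm_swapNat {j : ℕ} (h : j + 1 < m) :
    castSuccPerm m (swapNat m j) = swapNat (m + 1) j := by
  rw [swapNat, dif_pos h, swapNat, dif_pos (by omega), castSuccPerm_swap]
  rfl

lemma castSuccPerm_tcyc {i : ℕ} (hi : i < m) : castSuccPerm m (tcyc m i) = tcyc (m + 1) i := by
  induction i with
  | zero => exact map_one _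
  | succ i ih => rw [tcyc_succ, tcyc_succ, map_mul, ih (by omega), castSuccPerm_swapNat hi]

end Fin

namespace WreathZ

def stdGen (r k i : ℕ) : WreathZ r (k + 1) := ⟨Pi.single 0 1, tcyc (k + 1) i⟩

variable {r m : ℕ}

def permHom : WreathZ r m →* Perm (Fin m) := MonoidHom.mk' pi fun _ _ => rfl

def colorHom : Multiplicative (Fin m → ZMod r) →* WreathZ r m where
  toFun c := ⟨c.toAdd, 1⟩
  map_one' := rfl
  map_mul' _ _ := by ext <;> simp [toAdd_mul]

lemma eq_colorHom_of_pi_eq_one {x : WreathZ r m} (h : x.pi = 1) : x = colorHom (ofAdd x.c) := by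
  ext <;> simp [colorHom, h]

lemma mul_colorHom_mul_inv (g : WreathZ r m) (c : Fin m → ZMod r) :
    g * colorHom (ofAdd c) * g⁻¹ = colorHom (ofAdd (c ∘ ⇑g.pi⁻¹)) := by
  ext <;> simp [colorHom]

lemma exists_mem_pi_eq_of_map_permHom_eq_top {K : Subgroup (WreathZ r m)}
    (hperm : K.map permHom = ⊤) (π : Perm (Fin m)) : ∃ g ∈ K, g.pi = π := by
  simpa [permHom] using hperm.ge (Subgroup.mem_top π)

lemma colorHom_single_mem_of_map_permHom_eq_top [NeZero m] {K : Subgroup (WreathZ r m)}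
    (hperm : K.map permHom = ⊤) (h0 : colorHom (ofAdd (Pi.single 0 1)) ∈ K)
    (j : Fin m) (b : ZMod r) : colorHom (ofAdd (Pi.single j b)) ∈ K := by
  obtain ⟨z, rfl⟩ := ZMod.intCast_surjective b
  obtain ⟨g, hg, hgπ⟩ := exists_mem_pi_eq_of_map_permHom_eq_top hperm (swap 0 j)
  have hpow : colorHom (ofAdd (Pi.single 0 (z : ZMod r))) ∈ K := by
    simpa [← map_zpow, ← ofAdd_zsmul, ← Pi.single_smul] using zpow_mem h0 z
  have hconj := mul_mem (mul_mem hg hpow) (inv_mem hg)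
  rwa [mul_colorHom_mul_inv, Perm.inv_def, Pi.single_comp_equiv, symm_symm, hgπ,
    swap_apply_left] at hconj

lemma eq_top_of_map_permHom_eq_top [NeZero m] {K : Subgroup (WreathZ r m)}
    (hperm : K.map permHom = ⊤) (h0 : colorHom (ofAdd (Pi.single 0 1)) ∈ K) : K = ⊤ := by
  have hcolor (c : Fin m → ZMod r) : colorHom (ofAdd c) ∈ K := by
    rw [← Finset.univ_sum_single c, ofAdd_sum, ← Subgroup.mem_comap]
    exact Subgroup.prod_mem _ fun j _ =>
      colorHom_single_mem_of_map_permHom_eq_top hperm h0 j (c j)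
  refine eq_top_iff.mpr fun x _ => ?_
  obtain ⟨g, hg, hgπ⟩ := exists_mem_pi_eq_of_map_permHom_eq_top hperm x.pi
  have hdiag : x * g⁻¹ ∈ K := by
    rw [eq_colorHom_of_pi_eq_one (by simp [hgπ] : (x * g⁻¹).pi = 1)]
    exact hcolor _
  simpa using mul_mem hdiag hg

lemma closure_stdGen_eq_top (k : ℕ) :
    Subgroup.closure {x : WreathZ r (k + 1) | ∃ i ≤ k, x = stdGen r k i} = ⊤ := by
  set K := Subgroup.closure {x : WreathZ r (k + 1) | ∃ i ≤ k, x = stdGen r k i}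
  have hgen {i : ℕ} (hi : i ≤ k) : stdGen r k i ∈ K := Subgroup.subset_closure ⟨i, hi, rfl⟩
  refine eq_top_of_map_permHom_eq_top ?_ (hgen k.zero_le)
  rw [eq_top_iff,
    ← Subgroup.closure_eq_top_of_mclosure_eq_top (Perm.mclosure_swap_castSucc_succ k),
    Subgroup.closure_le]
  rintro _ ⟨i, rfl⟩
  have hswap : swap i.castSucc i.succ = permHom (stdGen r k (i + 1) * (stdGen r k i)⁻¹) := by
    simp only [map_mul, map_inv, permHom, stdGen, MonoidHom.mk'_apply, tcyc_succ,
      mul_inv_cancel_right, swapNat, dif_pos (Nat.succ_lt_succ i.isLt)]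
    rfl
  simp only [SetLike.mem_coe, hswap]
  exact Subgroup.mem_map_of_mem _ (mul_mem (hgen i.isLt) (inv_mem (hgen i.isLt.le)))

noncomputable def snocHom (w : ZMod r) : WreathZ r m →* WreathZ r (m + 1) where
  toFun y := ⟨Fin.snoc y.c (w * ∑ i, y.c i), Fin.castSuccPerm m y.pi⟩
  map_one' := by ext j <;> induction j using Fin.lastCases <;> simp
  map_mul' x y := by
    ext j
    · induction j using Fin.lastCases with
      | last =>
        simp [← map_inv, Finset.sum_add_distrib, mul_add, Equiv.sum_comp x.pi.symm y.c]
      | cast j => simp [← map_inv]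
    · simp

@[simp] lemma snocHom_c_castSucc (w : ZMod r) (y : WreathZ r m) (j : Fin m) :
    (snocHom w y).c j.castSucc = y.c j :=
  Fin.snoc_castSucc (α := fun _ => ZMod r) _ _ _

@[simp] lemma snocHom_pi_castSucc (w : ZMod r) (y : WreathZ r m) (j : Fin m) :
    (snocHom w y).pi j.castSucc = (y.pi j).castSucc :=
  Fin.castSuccPerm_castSucc _ _

lemma snocHom_injective (w : ZMod r) : Function.Injective (snocHom (m := m) w) := by
  intro x y h
  ext j
  · simpa using congr_arg (fun z => z.c j.castSucc) h
  · exact congr_arg (fun π => (π j : ℕ)) (Perm.viaEmbeddingHom_injective _ (congr_arg pi h))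

end WreathZ

lemma cbar_eq_snoc (r k : ℕ) (a : ℤ) :
    cbar r (k + 2) a = Fin.snoc (Pi.single 0 1 : Fin (k + 1) → ZMod r) ((a : ZMod r) - 1) := by
  funext j
  induction j using Fin.lastCases with
  | last =>
    simp only [cbar, Fin.val_last, Fin.snoc_last]
    rw [if_neg (by omega), if_pos (by omega), zero_add]
  | cast j =>
    simp only [cbar, Fin.val_castSucc, Fin.snoc_castSucc]
    rw [if_neg (show (j : ℕ) ≠ k + 2 - 1 by omega), add_zero, Pi.single_apply]
    simp only [Fin.ext_iff, Fin.val_zero]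

lemma uElt_eq_snocHom_stdGen {r p α k i : ℕ} (hi : i ≤ k) :
    uElt r p (k + 2) α i = WreathZ.snocHom ((α * p : ℤ) - 1 : ZMod r) (WreathZ.stdGen r k i) := by
  rw [uElt, if_neg (by omega), cbar_eq_snoc]
  ext j
  · simp [WreathZ.snocHom, WreathZ.stdGen]
  · simp [WreathZ.snocHom, WreathZ.stdGen, Fin.castSuccPerm_tcyc (Nat.lt_succ_of_le hi)]

theorem subgroup_closure_u_mulEquiv_wreath_general (r p n α : ℕ)
    (hn : 2 ≤ n) :
    ∃ φ : (Subgroup.closure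
        {x : WreathZ r n | ∃ i : ℕ, i ≤ n - 2 ∧ x = uElt r p n α i ∧ i ≠ n - 1})
          ≃* WreathZ r (n - 1),
      ∀ x, ((φ x).c = fun j : Fin (n - 1) =>
              (x : WreathZ r n).c (Fin.castLE (Nat.sub_le n 1) j)) ∧
        ∀ j : Fin (n - 1),
          (((φ x).pi) j).val
            = (((x : WreathZ r n).pi) (Fin.castLE (Nat.sub_le n 1) j)).val := by
  obtain ⟨k, rfl⟩ : ∃ k, n = k + 2 := ⟨n - 2, by omega⟩
  set s := WreathZ.snocHom (m := k + 1) ((α * p : ℤ) - 1 : ZMod r)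
  have hrange : s.range = Subgroup.closure {x : WreathZ r (k + 2) |
      ∃ i : ℕ, i ≤ k + 2 - 2 ∧ x = uElt r p (k + 2) α i ∧ i ≠ k + 2 - 1} := by
    rw [MonoidHom.range_eq_map, ← WreathZ.closure_stdGen_eq_top, MonoidHom.map_closure]
    congr 1
    ext x
    constructor
    · rintro ⟨_, ⟨i, hi, rfl⟩, rfl⟩
      exact ⟨i, by omega, (uElt_eq_snocHom_stdGen hi).symm, by omega⟩
    · rintro ⟨i, hi, rfl, -⟩
      exact ⟨_, ⟨i, by omega, rfl⟩, (uElt_eq_snocHom_stdGen (by omega)).symm⟩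
  let φ := (MulEquiv.subgroupCongr hrange.symm).trans
    (MonoidHom.ofInjective (WreathZ.snocHom_injective _)).symm
  refine ⟨φ, fun x => ?_⟩
  have hx : s (φ x) = x := MonoidHom.apply_ofInjective_symm (WreathZ.snocHom_injective _) _
  refine ⟨funext fun j => ?_, fun j => ?_⟩
  · rw [← hx]; exact (WreathZ.snocHom_c_castSucc _ _ j).symm
  · rw [← hx]; exact congr_arg Fin.val (WreathZ.snocHom_pi_castSucc _ _ j).symm

/-- Let `n ≥ 2`, `p ∣ r` and `0 ≤ α < r/p`. The subgroup `H` of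
`G(r,p,n)` generated by `u_0, …, u_{n-2}` is isomorphic to the wreath product `G(r,n-1)`,
via the map sending `((c_1,…,c_{n-1},c_n); t) ∈ H` to `((c_1,…,c_{n-1}); t)` (which in
particular preserves the action of the `S_n`-component on the first `n-1` letters). -/
theorem subgroup_closure_u_mulEquiv_wreath (r p n α : ℕ) (hr : 0 < r) (hp : p ∣ r)
    (hn : 2 ≤ n) (hα : α < r / p) :
    ∃ φ : (Subgroup.closure
        {x : WreathZ r n | ∃ i : ℕ, i ≤ n - 2 ∧ x = uElt r p n α i ∧ i ≠ n - 1})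
          ≃* WreathZ r (n - 1),
      ∀ x, ((φ x).c = fun j : Fin (n - 1) =>
              (x : WreathZ r n).c (Fin.castLE (Nat.sub_le n 1) j)) ∧
        ∀ j : Fin (n - 1),
          (((φ x).pi) j).val
            = (((x : WreathZ r n).pi) (Fin.castLE (Nat.sub_le n 1) j)).val :=
  subgroup_closure_u_mulEquiv_wreath_general r p n α hn
end

section
/- The sequence b = (β_n, β_{n−1}, …, β_1) is a perfect basis for the hyperoctahedral group B_n: every signed permutation w ∈ B_n has a unique presentation w = β_n^{k_n} β_{n−1}^{k_{n−1}} ⋯ β_1^{k_1} with 0 ≤ k_i < 2i for all 1 ≤ i ≤ n, and the order of β_i equals 2i. -/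
/-!
`β_i` fixes every letter `x` with `|x| > i` and permutes the `2i` letters `±1, …, ±i` in one
cycle `i → i-1 → ⋯ → 1 → -i → ⋯ → -1 → i`; hence `β_i` has order `2i`. Let `H_i ≤ B_n` be the
subgroup fixing all letters of absolute value `> i`, so `B_n = H_n ≥ ⋯ ≥ H_0 = 1`. An element `g`
of `H_i` lies in `H_{i-1}` iff it fixes `i` (it then fixes `-i` as well), and `g(i)` has absolute
value `≤ i`, so it is `β_i^k(i)` for exactly one `k < 2i`: the powers `β_i^k`, `k < 2i`, are left
coset representatives of `H_{i-1}` in `H_i`. Peeling off `β_n^{k_n}`, then `β_{n-1}^{k_{n-1}}`, …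
gives existence and uniqueness of the presentation.
-/

open scoped Classical

/-- `prodPow a k` is the ordered product `a 0 ^ k 0 * a 1 ^ k 1 * ⋯ * a (n-1) ^ k (n-1)`. -/
def prodPow {G : Type*} [Group G] {n : ℕ} (a : Fin n → G) (k : Fin n → ℕ) : G :=
  (List.ofFn fun i => a i ^ k i).prod

/-- The sequence `a` gives a unique presentation `g = a 0 ^ k 0 * ⋯ * a (n-1) ^ k (n-1)`
with `0 ≤ k i < m i` for every element `g` of the group. -/
def IsUniqueProd {G : Type*} [Group G] {n : ℕ} (a : Fin n → G) (m : Fin n → ℕ) : Prop :=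
  ∀ g : G, ∃! k : (i : Fin n) → Fin (m i), g = prodPow a fun i => (k i : ℕ)

/-- A perfect basis: every group element has a unique presentation with each exponent
below the order of the corresponding basis element. -/
def IsPerfectBasis {G : Type*} [Group G] {n : ℕ} (a : Fin n → G) : Prop :=
  IsUniqueProd a fun i => orderOf (a i)

/-- Every element of the subset `A` of the group `G` has a unique presentation
`g = a 0 ^ k 0 * ⋯ * a (n-1) ^ k (n-1)` with `0 ≤ k i < m i`. -/
def IsUniqueProdOn {G : Type*} [Group G] (A : Set G) {n : ℕ} (a : Fin n → G)
    (m : Fin n → ℕ) : Prop :=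
  ∀ g ∈ A, ∃! k : (i : Fin n) → Fin (m i), g = prodPow a fun i => (k i : ℕ)

/-- Encoding of the letters `{±1, …, ±n}`: letter `j` is `(⟨j-1⟩, false)` and `-j` is
`(⟨j-1⟩, true)`. -/
abbrev SF (n : ℕ) := Fin n × Bool

/-- Negation of a letter. -/
def negx {n : ℕ} (x : SF n) : SF n := (x.1, !x.2)

/-- The hyperoctahedral group `B_n`: permutations `w` of `{±1,…,±n}` with `w(-i) = -w(i)`. -/
def BSet (n : ℕ) : Set (Equiv.Perm (SF n)) := {w | ∀ x, w (negx x) = negx (w x)}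

/-- `sadj n j` is the Coxeter generator `s_{j+1}` of `B_n`: the signed permutation
exchanging the values `j+1` and `j+2` (1-indexed) as well as `-(j+1)` and `-(j+2)`. -/
def sadj (n j : ℕ) : Equiv.Perm (SF n) :=
  if h : j + 1 < n then
    Equiv.swap (⟨j, Nat.lt_of_succ_lt h⟩, false) (⟨j + 1, h⟩, false) *
      Equiv.swap (⟨j, Nat.lt_of_succ_lt h⟩, true) (⟨j + 1, h⟩, true)
  else 1

/-- The generator `s_0 = [-1, 2, …, n]` of `B_n`. -/
def s0B (n : ℕ) : Equiv.Perm (SF n) :=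
  if h : 0 < n then Equiv.swap (⟨0, h⟩, false) (⟨0, h⟩, true) else 1

/-- The generator `s_0' = [-2, -1, 3, …, n]` of `D_n`. -/
def s0D (n : ℕ) : Equiv.Perm (SF n) :=
  if h : 2 ≤ n then
    Equiv.swap (⟨0, by omega⟩, false) (⟨1, by omega⟩, true) *
      Equiv.swap (⟨1, by omega⟩, false) (⟨0, by omega⟩, true)
  else 1

/-- The signed permutation `v_n = [1, 2, …, n-1, -n]`. -/
def muP (n : ℕ) : Equiv.Perm (SF n) :=
  if h : 0 < n then Equiv.swap (⟨n - 1, by omega⟩, false) (⟨n - 1, by omega⟩, true) else 1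

/-- `betaP n i = β_i = [-i, 1, 2, …, i-1, i+1, …, n] = s_{i-1} ⋯ s_1 s_0`. -/
def betaP (n i : ℕ) : Equiv.Perm (SF n) :=
  ((List.range (i - 1)).reverse.map (sadj n)).prod * s0B n

/-- `deltaP n i = δ_i` for `1 ≤ i ≤ n`: for `i ≤ n-1`,
`δ_i = [-i, 1, 2, …, i-1, i+1, …, n-1, -n] = β_i v_n`, while `δ_n = [n, 1, 2, …, n-1]`. -/
def deltaP (n i : ℕ) : Equiv.Perm (SF n) :=
  if i = n then ((List.range (n - 1)).reverse.map (sadj n)).prod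
  else betaP n i * muP n

/-- The Coxeter generating set `S = {s_0, s_1, …, s_{n-1}}` of `B_n`. -/
def SgenB (n : ℕ) : Set (Equiv.Perm (SF n)) :=
  {w | w = s0B n ∨ ∃ j : ℕ, j + 1 < n ∧ w = sadj n j}

/-- The Coxeter generating set `S' = {s_0', s_1, …, s_{n-1}}` of `D_n`. -/
def SgenD (n : ℕ) : Set (Equiv.Perm (SF n)) :=
  {w | w = s0D n ∨ ∃ j : ℕ, j + 1 < n ∧ w = sadj n j}

/-- The word length of `g` with respect to a set `S` of generators: the least `l` such
that `g` is a product of `l` elements of `S`. -/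
noncomputable def wordLength {G : Type*} [Group G] (S : Set G) (g : G) : ℕ :=
  sInf {l | ∃ w : List G, (∀ x ∈ w, x ∈ S) ∧ w.length = l ∧ w.prod = g}

/-- The group `D_n` of even signed permutations: elements of `B_n` with an even number of
negative entries in their window. -/
def DSet (n : ℕ) : Set (Equiv.Perm (SF n)) :=
  {w | w ∈ BSet n ∧ Even (Finset.univ.filter fun i : Fin n => (w (i, false)).2 = true).card}

/-- The alternating subgroup `B_n^+` of `B_n`: elements of even Coxeter length. -/
def BplusSet (n : ℕ) : Set (Equiv.Perm (SF n)) :=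
  {w | w ∈ BSet n ∧ Even (wordLength (SgenB n) w)}

/-- The bijection `ψ : D_n → B_n^+`: `ψ(w) = w` if `w ∈ B_n^+`, otherwise `ψ(w) = w·v_n`
(negating the last letter of the window of `w`). -/
noncomputable def psiP (n : ℕ) (w : Equiv.Perm (SF n)) : Equiv.Perm (SF n) :=
  if w ∈ BplusSet n then w else w * muP n

/-- The generating set `R = {r_1, …, r_{n-1}}` of `B_n^+`, where `r_1 = [2, -1, 3, …, n]`
and `r_i = [-1, 2, …, i-1, i+1, i, i+2, …, n]` for `2 ≤ i ≤ n-1`; here `r_i = s_0 s_i`. -/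
def RSet (n : ℕ) : Set (Equiv.Perm (SF n)) :=
  {w | ∃ i : ℕ, 1 ≤ i ∧ i ≤ n - 1 ∧ w = s0B n * sadj n (i - 1)}

/-- The set `R ∪ R⁻¹`. -/
def RRinv (n : ℕ) : Set (Equiv.Perm (SF n)) :=
  RSet n ∪ {w | w⁻¹ ∈ RSet n}

/-- The basis `b = (β_n, β_{n-1}, …, β_1)` for `B_n`. -/
def bSeq (n : ℕ) : Fin n → Equiv.Perm (SF n) := fun j => betaP n (n - j.val)

/-- The basis `d = (δ_n, δ_{n-1}, …, δ_1)` for `D_n`. -/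
def dSeq (n : ℕ) : Fin n → Equiv.Perm (SF n) := fun j => deltaP n (n - j.val)

/-- The basis `c = (γ_n, γ_{n-1}, …, γ_1) = (ψ(δ_n), …, ψ(δ_1))` for `B_n^+`. -/
noncomputable def cSeq (n : ℕ) : Fin n → Equiv.Perm (SF n) :=
  fun j => psiP n (deltaP n (n - j.val))

/-- The exponent bounds for the bases `d` and `c`: `k_n < n` and `k_i < 2i` for `i < n`. -/
def mD (n : ℕ) : Fin n → ℕ := fun j => if j.val = 0 then n else 2 * (n - j.val)

/-- The exponent bounds for the basis `b`: `k_i < 2i`. -/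
def mB (n : ℕ) : Fin n → ℕ := fun j => 2 * (n - j.val)

section PerfectBasis

variable {G : Type*} [Group G]

lemma prodPow_succ {n : ℕ} (a : Fin (n + 1) → G) (k : Fin (n + 1) → ℕ) :
    prodPow a k = a 0 ^ k 0 * prodPow (fun i => a i.succ) (fun i => k i.succ) := by
  rw [prodPow, List.ofFn_succ, List.prod_cons, prodPow]

lemma prodPow_mem {n : ℕ} (K : Subgroup G) {a : Fin n → G} (ha : ∀ i, a i ∈ K)
    (k : Fin n → ℕ) : prodPow a k ∈ K :=
  K.list_prod_mem fun _ hx => by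
    obtain ⟨i, rfl⟩ := List.mem_ofFn.1 hx
    exact K.pow_mem (ha i) _

theorem isUniqueProdOn_of_subgroup_chain {n : ℕ} (a : Fin n → G) (m : Fin n → ℕ)
    (H : ℕ → Subgroup G) (hbot : H n = ⊥) (hanti : Antitone H) (ha : ∀ t : Fin n, a t ∈ H t)
    (hcoset : ∀ t : Fin n, ∀ g ∈ H t, ∃! k : Fin (m t), (a t ^ (k : ℕ))⁻¹ * g ∈ H (t + 1)) :
    IsUniqueProdOn (H 0) a m := by
  induction n generalizing H with
  | zero =>
    intro g hg
    rw [SetLike.mem_coe, hbot, Subgroup.mem_bot] at hg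
    exact ⟨finZeroElim, hg, fun _ _ => funext finZeroElim⟩
  | succ n ih =>
    have ih' := ih (fun i => a i.succ) (fun i => m i.succ) (fun t => H (t + 1)) hbot
      (fun s t hst => hanti (by omega)) (fun t => ha t.succ)
      (fun t => by simpa only [Fin.val_succ] using hcoset t.succ)
    intro g hg
    obtain ⟨k₀, hk₀, hk₀_unique⟩ := hcoset 0 g hg
    obtain ⟨k, hk, hk_unique⟩ := ih' _ hk₀
    refine ⟨Fin.cons k₀ k, ?_, fun k' hk' => ?_⟩
    · change g = _
      rw [prodPow_succ, Fin.cons_zero]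
      simp only [Fin.cons_succ]
      rw [← hk, mul_inv_cancel_left]
    · change g = _ at hk'
      rw [prodPow_succ] at hk'
      have htail : prodPow (fun i => a i.succ) (fun i => (k' i.succ : ℕ)) ∈ H 1 :=
        prodPow_mem _ (fun i => hanti (by simp) (ha i.succ)) _
      have h₀ : k' 0 = k₀ := hk₀_unique _ (by
        change (a 0 ^ (k' 0 : ℕ))⁻¹ * g ∈ H 1
        rwa [hk', inv_mul_cancel_left])
      have htail_eq : Fin.tail k' = k := hk_unique _ (by
        change _ = prodPow _ _
        rw [hk', h₀, inv_mul_cancel_left]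
        rfl)
      rw [← Fin.cons_self_tail k', h₀, htail_eq]

end PerfectBasis

lemma natCast_add_self_eq_zero (i : ℕ) : (i : ZMod (2 * i)) + i = 0 := by
  have h := ZMod.natCast_self (2 * i)
  push_cast at h
  linear_combination h

lemma existsUnique_fin_natCast_eq {m : ℕ} [NeZero m] (c : ZMod m) :
    ∃! k : Fin m, ((k : ℕ) : ZMod m) = c :=
  ⟨⟨c.val, c.val_lt⟩, ZMod.natCast_zmod_val c, fun k hk =>
    Fin.ext <| by subst hk; exact (ZMod.val_cast_of_lt k.isLt).symm⟩

section SignedPermutations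

open Equiv

lemma s0B_apply {n : ℕ} (hn : 0 < n) (x : SF n) :
    s0B n x = if x.1.val = 0 then negx x else x := by
  obtain ⟨⟨j, hj⟩, b⟩ := x
  simp only [s0B, dif_pos hn]
  by_cases h : j = 0
  · subst h
    cases b <;> simp [negx]
  · rw [Equiv.swap_apply_of_ne_of_ne] <;> simp [Prod.ext_iff, Fin.ext_iff, h]

lemma sadj_apply {n t : ℕ} (h : t + 1 < n) (x : SF n) :
    sadj n t x = if x.1.val = t then (⟨t + 1, h⟩, x.2)
      else if x.1.val = t + 1 then (⟨t, by omega⟩, x.2) else x := by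
  obtain ⟨⟨j, hj⟩, b⟩ := x
  simp only [sadj, dif_pos h, Perm.mul_apply]
  cases b <;>
  · by_cases h1 : j = t
    · subst h1; simp [Equiv.swap_apply_def, Prod.ext_iff, Fin.ext_iff]
    · by_cases h2 : j = t + 1
      · subst h2
        simp [Equiv.swap_apply_def, Prod.ext_iff, Fin.ext_iff]
      · simp [Equiv.swap_apply_def, Prod.ext_iff, Fin.ext_iff, h1, h2]

lemma betaP_succ (n : ℕ) {i : ℕ} (hi : 0 < i) : betaP n (i + 1) = sadj n (i - 1) * betaP n i := by
  obtain ⟨j, rfl⟩ := Nat.exists_eq_add_of_lt hi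
  simp [betaP, List.range_succ, mul_assoc]

lemma betaP_apply {n i : ℕ} (hi : 0 < i) (hin : i ≤ n) (x : SF n) :
    betaP n i x = if x.1.val = 0 then (⟨i - 1, by omega⟩, !x.2)
      else if x.1.val < i then (⟨x.1.val - 1, by omega⟩, x.2) else x := by
  obtain ⟨⟨j, hj⟩, b⟩ := x
  induction i, hi using Nat.le_induction with
  | base =>
    rw [show betaP n 1 = s0B n by simp [betaP], s0B_apply (by omega)]
    by_cases h : j = 0 <;> simp [h, negx]
  | succ i hi ih =>
    rw [betaP_succ n hi, Perm.mul_apply, ih (by omega), sadj_apply (by omega)]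
    dsimp only
    split_ifs <;> simp_all [Prod.ext_iff, Fin.ext_iff] <;> omega

/-- Position of a letter `x` with `|x| ≤ i` on the cycle of `β_i`, which runs
`i → i-1 → ⋯ → 1 → -i → ⋯ → -1 → i` and so lowers the position by one. -/
def cycleCoord (i : ℕ) {n : ℕ} (x : SF n) : ZMod (2 * i) :=
  ((x.1.val + if x.2 then i else 0 : ℕ) : ZMod (2 * i))

lemma cycleCoord_injOn {n i : ℕ} {x y : SF n} (hx : x.1.val < i) (hy : y.1.val < i)
    (h : cycleCoord i x = cycleCoord i y) : x = y := by
  rw [cycleCoord, cycleCoord, ZMod.natCast_eq_natCast_iff', Nat.mod_eq_of_lt (by split <;> omega),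
    Nat.mod_eq_of_lt (by split <;> omega)] at h
  obtain ⟨⟨j, hj⟩, b⟩ := x
  obtain ⟨⟨j', hj'⟩, b'⟩ := y
  simp only at hx hy h
  cases b <;> cases b' <;> simp only [if_true, if_false, Bool.false_eq_true] at h <;>
    simp [Prod.ext_iff] <;> omega

lemma cycleCoord_negx {n : ℕ} (i : ℕ) (x : SF n) :
    cycleCoord i (negx x) = cycleCoord i x + i := by
  obtain ⟨j, b⟩ := x
  cases b <;> simp only [cycleCoord, negx, Bool.not_false, Bool.not_true, Bool.false_eq_true,
    ↓reduceIte, Nat.cast_add, add_zero]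
  linear_combination (-1 : ZMod (2 * i)) * natCast_add_self_eq_zero i

lemma betaP_apply_of_le {n i : ℕ} (hi : 0 < i) (hin : i ≤ n) {x : SF n} (hx : i ≤ x.1.val) :
    betaP n i x = x := by
  rw [betaP_apply hi hin, if_neg (by omega), if_neg (by omega)]

lemma betaP_apply_of_lt {n i : ℕ} (hi : 0 < i) (hin : i ≤ n) {x : SF n} (hx : x.1.val < i) :
    (betaP n i x).1.val < i ∧ cycleCoord i (betaP n i x) = cycleCoord i x - 1 := by
  obtain ⟨⟨j, hj⟩, b⟩ := x
  rw [betaP_apply hi hin]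
  simp only at hx ⊢
  by_cases hj0 : j = 0
  · subst hj0
    refine ⟨by simp; omega, ?_⟩
    cases b <;> simp only [cycleCoord, Bool.not_false, Bool.not_true, Bool.false_eq_true,
      ↓reduceIte, Nat.cast_add, Nat.cast_sub hi, Nat.cast_one, Nat.cast_zero, zero_add, add_zero, zero_sub]
    linear_combination natCast_add_self_eq_zero i
  · rw [if_neg hj0, if_pos hx]
    refine ⟨by simp; omega, ?_⟩
    simp only [cycleCoord, Nat.cast_add, Nat.cast_sub (Nat.one_le_iff_ne_zero.2 hj0)]
    ring

lemma betaP_pow_apply_of_lt {n i : ℕ} (hi : 0 < i) (hin : i ≤ n) (k : ℕ) {x : SF n}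
    (hx : x.1.val < i) :
    ((betaP n i ^ k) x).1.val < i ∧ cycleCoord i ((betaP n i ^ k) x) = cycleCoord i x - k := by
  induction k with
  | zero => simpa using hx
  | succ k ih =>
    obtain ⟨hlt, hcoord⟩ := betaP_apply_of_lt hi hin ih.1
    rw [pow_succ', Perm.mul_apply, hcoord, ih.2]
    exact ⟨hlt, by push_cast; ring⟩

lemma existsUnique_betaP_pow_apply_eq {n i : ℕ} (hi : 0 < i) (hin : i ≤ n) {y : SF n}
    (hy : y.1.val < i) :
    ∃! k : Fin (2 * i), (betaP n i ^ (k : ℕ)) (⟨i - 1, by omega⟩, false) = y := by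
  have : NeZero (2 * i) := ⟨by omega⟩
  set x₀ : SF n := (⟨i - 1, by omega⟩, false)
  have hx₀ : x₀.1.val < i := by simp [x₀]; omega
  refine (existsUnique_congr fun k => ?_).2 (existsUnique_fin_natCast_eq
    (cycleCoord i x₀ - cycleCoord i y))
  obtain ⟨hlt, hcoord⟩ := betaP_pow_apply_of_lt hi hin k hx₀
  constructor
  · intro hk
    rw [← hk, hcoord]
    ring
  · intro hk
    exact cycleCoord_injOn hlt hy (by rw [hcoord, hk]; ring)

lemma betaP_mem {n i : ℕ} (hi : 0 < i) (hin : i ≤ n) : betaP n i ∈ BSet n := by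
  intro x
  by_cases hx : x.1.val < i
  · obtain ⟨hlt, hcoord⟩ := betaP_apply_of_lt hi hin hx
    obtain ⟨hlt', hcoord'⟩ := betaP_apply_of_lt (x := negx x) hi hin hx
    refine cycleCoord_injOn hlt' hlt ?_
    rw [hcoord', cycleCoord_negx, cycleCoord_negx, hcoord]
    ring
  · rw [not_lt] at hx
    rw [betaP_apply_of_le hi hin hx, betaP_apply_of_le hi hin (x := negx x) hx]

def hyperoctahedral (n : ℕ) : Subgroup (Perm (SF n)) where
  carrier := BSet n
  one_mem' _ := rfl
  mul_mem' {_ v} hu hv x := by simp only [Perm.mul_apply, hv x, hu (v x)]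
  inv_mem' {u} hu x := u.injective (by rw [hu]; simp)

/-- The signed permutations fixing every letter `x` with `|x| > j`. -/
def fixingLettersFrom (n j : ℕ) : Subgroup (Perm (SF n)) :=
  hyperoctahedral n ⊓ fixingSubgroup (Perm (SF n)) {x : SF n | j ≤ x.1.val}

lemma mem_fixingLettersFrom {n j : ℕ} {w : Perm (SF n)} :
    w ∈ fixingLettersFrom n j ↔ w ∈ BSet n ∧ ∀ x : SF n, j ≤ x.1.val → w x = x := by
  simp only [fixingLettersFrom, Subgroup.mem_inf, mem_fixingSubgroup_iff, Set.mem_ofPred_eq,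
    Perm.smul_def]
  rfl

lemma fixingLettersFrom_mono (n : ℕ) : Monotone (fixingLettersFrom n) := fun _ _ hjk =>
  inf_le_inf_left _ (fixingSubgroup_antitone _ _ fun _ (hx : _ ≤ _) => (hjk.trans hx : _ ≤ _))

lemma fixingLettersFrom_zero (n : ℕ) : fixingLettersFrom n 0 = ⊥ :=
  (Subgroup.eq_bot_iff_forall _).2 fun _ hw =>
    Equiv.ext fun x => (mem_fixingLettersFrom.1 hw).2 x (Nat.zero_le _)

lemma coe_fixingLettersFrom_self (n : ℕ) : (fixingLettersFrom n n : Set (Perm (SF n))) = BSet n :=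
  Set.ext fun _ => ⟨fun hw => (mem_fixingLettersFrom.1 hw).1,
    fun hw => mem_fixingLettersFrom.2 ⟨hw, fun x hx => absurd x.1.isLt (not_lt.2 hx)⟩⟩

lemma betaP_mem_fixingLettersFrom {n i : ℕ} (hi : 0 < i) (hin : i ≤ n) :
    betaP n i ∈ fixingLettersFrom n i :=
  mem_fixingLettersFrom.2 ⟨betaP_mem hi hin, fun _ => betaP_apply_of_le hi hin⟩

lemma orderOf_betaP {n i : ℕ} (hi : 0 < i) (hin : i ≤ n) : orderOf (betaP n i) = 2 * i := by
  rw [orderOf_eq_iff (by omega)]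
  refine ⟨Equiv.ext fun x => ?_, fun k hk hk0 hk1 => ?_⟩
  · by_cases hx : x.1.val < i
    · obtain ⟨hlt, hcoord⟩ := betaP_pow_apply_of_lt hi hin (2 * i) hx
      exact cycleCoord_injOn hlt hx (by rw [hcoord, ZMod.natCast_self, sub_zero, Perm.one_apply])
    · have hpow := pow_mem (betaP_mem_fixingLettersFrom hi hin) (2 * i)
      exact (mem_fixingLettersFrom.1 hpow).2 x (not_lt.1 hx)
  · have h := (existsUnique_betaP_pow_apply_eq hi hin (y := (⟨i - 1, by omega⟩, false))
      (by simp; omega)).unique (y₁ := ⟨k, hk⟩) (y₂ := ⟨0, by omega⟩) (by rw [hk1]; rfl) rfl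
    simp only [Fin.mk.injEq] at h
    omega

lemma apply_lt_of_mem_fixingLettersFrom {n i : ℕ} {w : Perm (SF n)}
    (hw : w ∈ fixingLettersFrom n i) {x : SF n} (hx : x.1.val < i) : (w x).1.val < i := by
  by_contra hwx
  have hfix : w (w x) = w x := (mem_fixingLettersFrom.1 hw).2 _ (not_lt.1 hwx)
  rw [w.injective hfix] at hwx
  exact hwx hx

/-- An element of `B_n` that fixes `i` also fixes `-i`. -/
lemma mem_fixingLettersFrom_pred_iff {n i : ℕ} (hi : 0 < i) (hin : i ≤ n) {w : Perm (SF n)}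
    (hw : w ∈ fixingLettersFrom n i) :
    w ∈ fixingLettersFrom n (i - 1) ↔
      w (⟨i - 1, by omega⟩, false) = (⟨i - 1, by omega⟩, false) := by
  obtain ⟨hwB, hwfix⟩ := mem_fixingLettersFrom.1 hw
  refine ⟨fun h => (mem_fixingLettersFrom.1 h).2 _ le_rfl, fun h => ?_⟩
  refine mem_fixingLettersFrom.2 ⟨hwB, fun ⟨⟨j, hj⟩, b⟩ hx => ?_⟩
  obtain hx | rfl : i ≤ j ∨ j = i - 1 := by simp only at hx; omega
  · exact hwfix _ hx
  · cases b
    · exact h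
    · exact (hwB (⟨i - 1, hj⟩, false)).trans (congrArg negx h)

lemma existsUnique_betaP_pow_inv_mul_mem {n i : ℕ} (hi : 0 < i) (hin : i ≤ n)
    {g : Perm (SF n)} (hg : g ∈ fixingLettersFrom n i) :
    ∃! k : Fin (2 * i), (betaP n i ^ (k : ℕ))⁻¹ * g ∈ fixingLettersFrom n (i - 1) := by
  have hβ := betaP_mem_fixingLettersFrom hi hin
  refine (existsUnique_congr fun k => ?_).2 (existsUnique_betaP_pow_apply_eq hi hin
    (apply_lt_of_mem_fixingLettersFrom hg (x := (⟨i - 1, by omega⟩, false)) (by simp; omega)))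
  rw [mem_fixingLettersFrom_pred_iff hi hin (mul_mem (inv_mem (pow_mem hβ _)) hg),
    Perm.mul_apply, Perm.inv_eq_iff_eq, eq_comm]

end SignedPermutations

/-- The sequence `b = (β_n, β_{n-1}, …, β_1)` is a perfect basis for
the hyperoctahedral group `B_n`: each `β_i` lies in `B_n` and has order `2i`, and every
`w ∈ B_n` has a unique presentation `w = β_n^{k_n} ⋯ β_1^{k_1}` with `0 ≤ k_i < 2i`. -/
theorem beta_isPerfectBasis_hyperoctahedral (n : ℕ) :
    (∀ j : Fin n, bSeq n j ∈ BSet n) ∧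
    (∀ i : ℕ, 1 ≤ i → i ≤ n → orderOf (betaP n i) = 2 * i) ∧
    IsUniqueProdOn (BSet n) (bSeq n) (mB n) := by
  refine ⟨fun j => betaP_mem (by omega) (by omega), fun i hi hin => orderOf_betaP hi hin, ?_⟩
  rw [← coe_fixingLettersFrom_self]
  refine isUniqueProdOn_of_subgroup_chain (bSeq n) (mB n) (fun t => fixingLettersFrom n (n - t))
    (by simp [fixingLettersFrom_zero]) (fun s t hst => fixingLettersFrom_mono n (by omega))
    (fun t => betaP_mem_fixingLettersFrom (by omega) (by omega)) fun t g hg => ?_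
  rw [show n - (t + 1) = n - t - 1 by omega]
  exact existsUnique_betaP_pow_inv_mul_mem (by omega) (by omega) hg
end
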